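/- arXiv:1410.7605 — 2 statements merged into one kernel-verified Lean document; each statement's English description precedes it below -/
import Mathlib

section
/- Let A be a symmetric trilinear form on ℝ^p and B a positive-semidefinite symmetric bilinear form on ℝ^p. If |A[u,u,u]| ≤ B[u,u]^{3/2} for all u ∈ ℝ^p, then |A[u,v,w]| ≤ B[u,u]^{1/2} B[v,v]^{1/2} B[w,w]^{1/2} for all u, v, w ∈ ℝ^p. -/
/-!
Replacing `B` by the positive definite form `β = B + ε⟪·, ·⟫` and letting `ε → 0`, we may
assume `β` positive definite, so that its unit sphere is compact. Let `α` be the maximum of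
`A x x y` over `β`-unit vectors `x, y`; by homogeneity `|A y y a| ≤ α β(y, y)` for every unit `a`.
If `A a a b = α`, then `4α = A(a+b, a+b, a) - A(a-b, a-b, a)` while
`β(a+b, a+b) + β(a-b, a-b) = 4`, so `A(a+b, a+b, a) = α β(a+b, a+b)`: the normalisation `v` of
`a + b` again gives a maximising pair `(v, a)`, with `β(v, a) = √((1 + β(a, b)) / 2) > β(a, b)`
unless `β(a, b) = ±1`. Hence a maximising pair with the largest `β(a, b)` has `b = ±a`, and
`α = A c c c ≤ 1` for `c = ±a`. The polarization `4 A x y z = A(x+y, x+y, z) - A(x-y, x-y, z)`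
finally passes from `A x x z` to `A x y z`.
-/

open LinearMap (BilinForm)
open Topology

namespace TrilinearForm

section Algebra

variable {E : Type*} [AddCommGroup E] [Module ℝ E]
  {A : E →ₗ[ℝ] E →ₗ[ℝ] E →ₗ[ℝ] ℝ} {β : BilinForm ℝ E}

lemma exists_pos_smul_unit_eq (hβpos : ∀ x, x ≠ 0 → 0 < β x x) {x : E} (hx : x ≠ 0) :
    ∃ r : ℝ, 0 < r ∧ ∃ y, β y y = 1 ∧ x = r • y := by
  have hr : 0 < √(β x x) := Real.sqrt_pos.2 (hβpos x hx)
  refine ⟨√(β x x), hr, (√(β x x))⁻¹ • x, ?_, (smul_inv_smul₀ hr.ne' x).symm⟩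
  simp only [map_smul, LinearMap.smul_apply, smul_eq_mul, ← mul_assoc, ← mul_inv,
    Real.mul_self_sqrt (hβpos x hx).le]
  exact inv_mul_cancel₀ (hβpos x hx).ne'

lemma apply_le_of_forall_apply_le (hβpos : ∀ x, x ≠ 0 → 0 < β x x) {M : ℝ}
    (hM : ∀ x y, β x x = 1 → β y y = 1 → A x x y ≤ M) (x y : E) :
    A x x y ≤ M * β x x * √(β y y) := by
  rcases eq_or_ne x 0 with rfl | hx
  · simp
  rcases eq_or_ne y 0 with rfl | hy
  · simp
  obtain ⟨r, hr, x, hx1, rfl⟩ := exists_pos_smul_unit_eq hβpos hx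
  obtain ⟨s, hs, y, hy1, rfl⟩ := exists_pos_smul_unit_eq hβpos hy
  have hrrs : 0 < r * r * s := by positivity
  have := mul_le_mul_of_nonneg_left (hM x y hx1 hy1) hrrs.le
  simp only [map_smul, LinearMap.smul_apply, smul_eq_mul, hx1, hy1, mul_one,
    Real.sqrt_mul_self hs.le]
  linarith

lemma abs_apply_le_of_forall_apply_le (hβpos : ∀ x, x ≠ 0 → 0 < β x x) {M : ℝ}
    (hM : ∀ x y, β x x = 1 → β y y = 1 → A x x y ≤ M) (x y : E) :
    |A x x y| ≤ M * β x x * √(β y y) := by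
  have hneg := apply_le_of_forall_apply_le hβpos hM x (-y)
  simp only [map_neg, LinearMap.neg_apply, neg_neg] at hneg
  exact abs_le.2 ⟨by linarith, apply_le_of_forall_apply_le hβpos hM x y⟩

variable {a b : E}

lemma apply_add_add_eq_of_apply_eq (hA₁ : ∀ u v w, A u v w = A v u w)
    (hA₂ : ∀ u v w, A u v w = A u w v) {α : ℝ} (hα : ∀ y, |A y y a| ≤ α * β y y)
    (ha : β a a = 1) (hb : β b b = 1) (hab : A a a b = α) :
    A (a + b) (a + b) a = α * β (a + b) (a + b) := by
  have hsum := (abs_le.1 (hα (a + b))).2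
  have hdiff := (abs_le.1 (hα (a - b))).1
  have hba : A a b a = α := (hA₂ a a b).symm.trans hab
  have hbaa : A b a a = α := (hA₁ b a a).trans hba
  simp only [map_add, map_sub, LinearMap.add_apply, LinearMap.sub_apply] at hsum hdiff ⊢
  refine le_antisymm hsum ?_
  linear_combination hdiff - 2 * hba - 2 * hbaa + 2 * α * ha + 2 * α * hb

lemma exists_apply_self_eq_of_apply_lt_one (hβ : β.IsSymm) (hβpos : ∀ x, x ≠ 0 → 0 < β x x)
    (hA₁ : ∀ u v w, A u v w = A v u w) (hA₂ : ∀ u v w, A u v w = A u w v) {α : ℝ}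
    (hα : ∀ y, |A y y a| ≤ α * β y y) (ha : β a a = 1) (hb : β b b = 1) (hab : A a a b = α)
    (hlo : -1 < β a b) (hhi : β a b < 1) :
    ∃ v, β v v = 1 ∧ A v v a = α ∧ β a b < β v a := by
  have hnorm : β (a + b) (a + b) = 2 * (1 + β a b) := by
    simp only [map_add, LinearMap.add_apply, ha, hb, hβ.eq b a]
    ring
  have hne : a + b ≠ 0 := by
    intro h
    simp only [h, map_zero] at hnorm
    linarith
  have hA := apply_add_add_eq_of_apply_eq hA₁ hA₂ hα ha hb hab
  have hcos : β (a + b) a = 1 + β a b := by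
    simp only [map_add, LinearMap.add_apply, ha, hβ.eq b a]
  obtain ⟨r, hr, v, hv, hrv⟩ := exists_pos_smul_unit_eq hβpos hne
  simp only [hrv, map_smul, LinearMap.smul_apply, smul_eq_mul, hv] at hnorm hA hcos
  have hva : β v a = r / 2 := by
    field_simp
    nlinarith
  refine ⟨v, hv, ?_, ?_⟩
  · have hrr : r * r ≠ 0 := by positivity
    exact mul_left_cancel₀ hrr (by linear_combination hA)
  · rw [hva]
    nlinarith

lemma abs_apply_le_of_abs_apply_self_le (hβpos : ∀ x, x ≠ 0 → 0 < β x x)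
    (hA₁ : ∀ u v w, A u v w = A v u w) (h : ∀ x z, |A x x z| ≤ β x x * √(β z z)) (x y z : E) :
    |A x y z| ≤ √(β x x) * √(β y y) * √(β z z) := by
  rcases eq_or_ne x 0 with rfl | hx
  · simp
  rcases eq_or_ne y 0 with rfl | hy
  · simp
  obtain ⟨r, hr, x, hx1, rfl⟩ := exists_pos_smul_unit_eq hβpos hx
  obtain ⟨s, hs, y, hy1, rfl⟩ := exists_pos_smul_unit_eq hβpos hy
  have hpol : 4 * A x y z = A (x + y) (x + y) z - A (x - y) (x - y) z := by
    simp only [map_add, map_sub, LinearMap.add_apply, LinearMap.sub_apply, hA₁ y x]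
    ring
  have hnorms : β (x + y) (x + y) + β (x - y) (x - y) = 4 := by
    simp only [map_add, map_sub, LinearMap.add_apply, LinearMap.sub_apply, hx1, hy1]
    ring
  have hunit : |A x y z| ≤ √(β z z) := by
    have := (abs_sub _ _).trans (add_le_add (h (x + y) z) (h (x - y) z))
    rw [← hpol, abs_mul, ← add_mul, hnorms] at this
    norm_num at this
    exact this
  simp only [map_smul, LinearMap.smul_apply, smul_eq_mul, hx1, hy1, mul_one, abs_mul,
    abs_of_pos hr, abs_of_pos hs, Real.sqrt_mul_self hr.le, Real.sqrt_mul_self hs.le]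
  have hrs : 0 < r * s := by positivity
  nlinarith

end Algebra

section FiniteDimensional

variable {E : Type*} [NormedAddCommGroup E] [NormedSpace ℝ E]
  {A : E →ₗ[ℝ] E →ₗ[ℝ] E →ₗ[ℝ] ℝ} {β : BilinForm ℝ E}

lemma apply_self_pos_of_coercive {ε : ℝ} (hε : 0 < ε) (hcoer : ∀ x, ε * ‖x‖ ^ 2 ≤ β x x) :
    ∀ x, x ≠ 0 → 0 < β x x := fun x hx =>
  (by positivity : 0 < ε * ‖x‖ ^ 2).trans_le (hcoer x)

variable [FiniteDimensional ℝ E]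

lemma continuous_apply_self_apply (A : E →ₗ[ℝ] E →ₗ[ℝ] E →ₗ[ℝ] ℝ) :
    Continuous fun q : E × E => A q.1 q.1 q.2 := by
  let A' := (A.compr₂ LinearMap.toContinuousLinearMap.toLinearMap).toContinuousBilinearMap
  change Continuous fun q : E × E => A' q.1 q.1 q.2
  fun_prop

lemma isCompact_setOf_apply_self_eq_one {ε : ℝ} (hε : 0 < ε)
    (hcoer : ∀ x, ε * ‖x‖ ^ 2 ≤ β x x) : IsCompact {x | β x x = 1} := by
  refine Metric.isCompact_of_isClosed_isBounded (isClosed_eq ?_ continuous_const) ?_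
  · change Continuous fun x => β.toContinuousBilinearMap x x
    fun_prop
  · refine isBounded_iff_forall_norm_le.2 ⟨√(1 / ε), fun x hx => Real.le_sqrt_of_sq_le ?_⟩
    rw [le_div_iff₀ hε, mul_comm, ← hx.out]
    exact hcoer x

theorem apply_le_one_of_apply_self_le_one (hβ : β.IsSymm) {ε : ℝ} (hε : 0 < ε)
    (hcoer : ∀ x, ε * ‖x‖ ^ 2 ≤ β x x) (hA₁ : ∀ u v w, A u v w = A v u w)
    (hA₂ : ∀ u v w, A u v w = A u w v) (hA : ∀ z, β z z = 1 → A z z z ≤ 1) {x y : E}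
    (hx : β x x = 1) (hy : β y y = 1) : A x x y ≤ 1 := by
  have hβnonneg : ∀ z, 0 ≤ β z z := fun z => (by positivity : 0 ≤ ε * ‖z‖ ^ 2).trans (hcoer z)
  have hβpos := apply_self_pos_of_coercive hε hcoer
  have hK := (isCompact_setOf_apply_self_eq_one hε hcoer).prod
    (isCompact_setOf_apply_self_eq_one hε hcoer)
  have hAcont := continuous_apply_self_apply A
  obtain ⟨q, hqK, hqmax⟩ := hK.exists_isMaxOn ⟨(x, y), hx, hy⟩ hAcont.continuousOn
  obtain ⟨α, hqα⟩ : ∃ α, A q.1 q.1 q.2 = α := ⟨_, rfl⟩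
  have hαmax : ∀ x y, β x x = 1 → β y y = 1 → A x x y ≤ α := fun x y hx hy =>
    hqα ▸ hqmax (show (x, y) ∈ _ from ⟨hx, hy⟩)
  have hβcont : Continuous fun q : E × E => β q.1 q.2 := by
    change Continuous fun q : E × E => β.toContinuousBilinearMap q.1 q.2
    fun_prop
  obtain ⟨⟨a, b⟩, ⟨⟨ha, hb⟩, hab⟩, hmax⟩ :=
    (hK.inter_right (isClosed_eq hAcont continuous_const)).exists_isMaxOn ⟨q, hqK, hqα⟩
      hβcont.continuousOn
  change β a a = 1 at ha
  change β b b = 1 at hb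
  change A a a b = α at hab
  refine (hαmax x y hx hy).trans ?_
  have hα : ∀ z, |A z z a| ≤ α * β z z := fun z => by
    simpa [ha] using abs_apply_le_of_forall_apply_le hβpos hαmax z a
  have hplus : β (a + b) (a + b) = 2 * (1 + β a b) := by
    simp only [map_add, LinearMap.add_apply, ha, hb, hβ.eq b a]
    ring
  have hminus : β (a - b) (a - b) = 2 * (1 - β a b) := by
    simp only [map_sub, LinearMap.sub_apply, ha, hb, hβ.eq b a]
    ring
  have hzero : ∀ z, β z z = 0 → z = 0 := fun z hz => by
    by_contra h
    exact (hβpos z h).ne' hz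
  rcases eq_or_ne (β a b) (-1) with hc | hc
  · obtain rfl : b = -a := eq_neg_of_add_eq_zero_right (hzero _ (by rw [hplus, hc]; ring))
    have := hA (-a) (by simpa using ha)
    simp only [map_neg, LinearMap.neg_apply, neg_neg] at this hab
    linarith
  rcases eq_or_ne (β a b) 1 with hc' | hc'
  · obtain rfl : a = b := sub_eq_zero.1 (hzero _ (by rw [hminus, hc']; ring))
    exact hab ▸ hA a ha
  have hlo : -1 < β a b := lt_of_le_of_ne (by linarith [hβnonneg (a + b)]) hc.symm
  have hhi : β a b < 1 := lt_of_le_of_ne (by linarith [hβnonneg (a - b)]) hc'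
  obtain ⟨v, hv, hva, hlt⟩ :=
    exists_apply_self_eq_of_apply_lt_one hβ hβpos hA₁ hA₂ hα ha hb hab hlo hhi
  exact absurd (hmax (show (v, a) ∈ _ from ⟨⟨hv, ha⟩, hva⟩)) hlt.not_ge

theorem abs_apply_le_of_apply_self_le_one (hβ : β.IsSymm) {ε : ℝ} (hε : 0 < ε)
    (hcoer : ∀ x, ε * ‖x‖ ^ 2 ≤ β x x) (hA₁ : ∀ u v w, A u v w = A v u w)
    (hA₂ : ∀ u v w, A u v w = A u w v) (hA : ∀ z, β z z = 1 → A z z z ≤ 1) (x y z : E) :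
    |A x y z| ≤ √(β x x) * √(β y y) * √(β z z) := by
  have hβpos := apply_self_pos_of_coercive hε hcoer
  refine abs_apply_le_of_abs_apply_self_le hβpos hA₁ (fun x z => ?_) x y z
  simpa using abs_apply_le_of_forall_apply_le hβpos
    (fun x y hx hy => apply_le_one_of_apply_self_le_one hβ hε hcoer hA₁ hA₂ hA hx hy) x z

end FiniteDimensional

end TrilinearForm

theorem trilinear_form_bound {p : ℕ}
    (A : EuclideanSpace ℝ (Fin p) →ₗ[ℝ] EuclideanSpace ℝ (Fin p) →ₗ[ℝ]
          EuclideanSpace ℝ (Fin p) →ₗ[ℝ] ℝ)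
    (B : EuclideanSpace ℝ (Fin p) →ₗ[ℝ] EuclideanSpace ℝ (Fin p) →ₗ[ℝ] ℝ)
    (hAsymm₁ : ∀ u v w, A u v w = A v u w)
    (hAsymm₂ : ∀ u v w, A u v w = A u w v)
    (hBsymm : ∀ u v, B u v = B v u)
    (hBpsd : ∀ u, 0 ≤ B u u)
    (hAB : ∀ u, |A u u u| ≤ (B u u) ^ ((3 : ℝ) / 2)) :
    ∀ u v w, |A u v w| ≤ Real.sqrt (B u u) * Real.sqrt (B v v) * Real.sqrt (B w w) := by
  intro u v w
  have hreg : ∀ ε > 0, |A u v w| ≤ √(B u u + ε * ‖u‖ ^ 2) * √(B v v + ε * ‖v‖ ^ 2) *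
      √(B w w + ε * ‖w‖ ^ 2) := by
    intro ε hε
    set β := B + ε • innerₗ (EuclideanSpace ℝ (Fin p))
    have hβ : ∀ x, β x x = B x x + ε * ‖x‖ ^ 2 := fun x => by simp [β]
    have hβsymm : LinearMap.BilinForm.IsSymm β :=
      ⟨fun x y => by simp [β, hBsymm x y, real_inner_comm]⟩
    have hcube : ∀ z, β z z = 1 → A z z z ≤ 1 := fun z hz =>
      calc A z z z ≤ B z z ^ ((3 : ℝ) / 2) := (le_abs_self _).trans (hAB z)
        _ ≤ 1 := Real.rpow_le_one (hBpsd z) (by nlinarith [hβ z]) (by norm_num)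
    simpa only [hβ] using TrilinearForm.abs_apply_le_of_apply_self_le_one hβsymm hε
      (fun x => by rw [hβ]; linarith [hBpsd x]) hAsymm₁ hAsymm₂ hcube u v w
  have hcont : Continuous fun ε : ℝ => √(B u u + ε * ‖u‖ ^ 2) * √(B v v + ε * ‖v‖ ^ 2) *
      √(B w w + ε * ‖w‖ ^ 2) := by
    fun_prop
  refine ge_of_tendsto (x := 𝓝[>] 0) ?_ (eventually_nhdsWithin_of_forall hreg)
  simpa using (hcont.tendsto 0).mono_left nhdsWithin_le_nhds
end

section
/- Let L : ℝ^p → ℝ be convex and differentiable, S ⊆ {1,…,p}, and suppose β̌ minimizes L(β) + τ‖β‖₁ over {β : β_{S^c} = 0}, so that [∇L(β̌)]_S + τ ž_S = 0 for some ž_S with ‖ž_S‖_∞ ≤ 1. If additionally ‖[∇L(β̌)]_{S^c}‖_∞ < τ, then β̌ is a global minimizer of L(β) + τ‖β‖₁ over all of ℝ^p. -/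
/-!
Write `F = L + τ ‖·‖₁`, fix `β`, and split the direction `v = β - β̌` as `(v - w) + w` with
`w = β_{Sᶜ}`. The point `β̌ + t (v - w)` is supported on `S`, and `t w` has disjoint support from
it, so restricted minimality gives
`F (β̌ + t v) - F β̌ ≥ L (β̌ + t v) - L (β̌ + t (v - w)) + t τ ‖w‖₁`.
Dividing by `t` and letting `t → 0⁺`, the one-sided slope of `F` at `β̌` in the direction `v` is at
least `∇L(β̌) · w + τ ‖w‖₁`, which is nonnegative by dual feasibility since `w` lives on `Sᶜ`.
By convexity of `F` that slope is at most `F β - F β̌`.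
-/

open Set Filter Topology

theorem ConvexOn.add_le_of_tendsto_of_le_slope {E : Type*} [AddCommGroup E] [Module ℝ E]
    {f : E → ℝ} (hf : ConvexOn ℝ univ f) (x v : E) {g : ℝ → ℝ} {c : ℝ}
    (hg : ∀ t > 0, g t ≤ t⁻¹ * (f (x + t • v) - f x)) (hc : Tendsto g (𝓝[>] 0) (𝓝 c)) :
    f x + c ≤ f (x + v) := by
  have hslope : ∀ t ∈ Ioc (0 : ℝ) 1, g t ≤ f (x + v) - f x := by
    rintro t ⟨ht0, ht1⟩
    have hconv := hf.2 (mem_univ x) (mem_univ (x + v)) (sub_nonneg.2 ht1) ht0.le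
      (sub_add_cancel 1 t)
    have hx : (1 - t) • x + t • (x + v) = x + t • v := by module
    rw [hx, smul_eq_mul, smul_eq_mul] at hconv
    calc g t ≤ t⁻¹ * (f (x + t • v) - f x) := hg t ht0
      _ ≤ t⁻¹ * (t * (f (x + v) - f x)) := by gcongr; linarith
      _ = f (x + v) - f x := by field_simp
  linarith [le_of_tendsto hc (eventually_of_mem (Ioc_mem_nhdsGT one_pos) hslope)]

theorem HasFDerivAt.tendsto_slope_sub_right {E : Type*} [NormedAddCommGroup E] [NormedSpace ℝ E]
    {f : E → ℝ} {f' : E →L[ℝ] ℝ} {x : E} (hf : HasFDerivAt f f' x) (a b : E) :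
    Tendsto (fun t : ℝ => t⁻¹ * (f (x + t • a) - f (x + t • b))) (𝓝[>] 0) (𝓝 (f' (a - b))) := by
  have ha := (hf.hasLineDerivAt a).tendsto_slope_zero_right
  have hb := (hf.hasLineDerivAt b).tendsto_slope_zero_right
  rw [map_sub]
  refine (ha.sub hb).congr fun t => ?_
  simp only [smul_eq_mul]
  ring

section L1

variable {ι : Type*} [Fintype ι]

theorem sum_abs_add_of_disjoint (u w : ι → ℝ) (h : ∀ i, u i = 0 ∨ w i = 0) :
    ∑ i, |u i + w i| = ∑ i, |u i| + ∑ i, |w i| := by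
  rw [← Finset.sum_add_distrib]
  refine Finset.sum_congr rfl fun i _ => ?_
  rcases h i with hu | hw
  · simp [hu]
  · simp [hw]

theorem convexOn_sum_abs : ConvexOn ℝ univ fun β : EuclideanSpace ℝ ι => ∑ i, |β i| := by
  refine ⟨convex_univ, fun x _ y _ a b ha hb _ => ?_⟩
  simp only [PiLp.add_apply, PiLp.smul_apply, smul_eq_mul, Finset.mul_sum,
    ← Finset.sum_add_distrib]
  gcongr with i
  calc |a * x i + b * y i| ≤ |a * x i| + |b * y i| := abs_add_le _ _
    _ = a * |x i| + b * |y i| := by rw [abs_mul, abs_mul, abs_of_nonneg ha, abs_of_nonneg hb]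

theorem abs_apply_le_mul_sum_abs [DecidableEq ι] (φ : EuclideanSpace ℝ ι →L[ℝ] ℝ) {τ : ℝ}
    (S : Set ι) (hφ : ∀ i ∉ S, |φ (EuclideanSpace.single i 1)| ≤ τ)
    (w : EuclideanSpace ℝ ι) (hw : ∀ i ∈ S, w i = 0) :
    |φ w| ≤ τ * ∑ i, |w i| := by
  have hexpand : φ w = ∑ i, w i * φ (EuclideanSpace.single i 1) := by
    conv_lhs => rw [← (EuclideanSpace.basisFun ι ℝ).sum_repr w]
    simp [map_sum]
  rw [hexpand, Finset.mul_sum]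
  refine (Finset.abs_sum_le_sum_abs _ _).trans (Finset.sum_le_sum fun i _ => ?_)
  by_cases hi : i ∈ S
  · simp [hw i hi]
  · rw [abs_mul, mul_comm τ]
    exact mul_le_mul_of_nonneg_left (hφ i hi) (abs_nonneg _)

def l1Penalized (L : EuclideanSpace ℝ ι → ℝ) (τ : ℝ) (β : EuclideanSpace ℝ ι) : ℝ :=
  L β + τ * ∑ i, |β i|

theorem convexOn_l1Penalized {L : EuclideanSpace ℝ ι → ℝ} (hL : ConvexOn ℝ univ L) {τ : ℝ}
    (hτ : 0 ≤ τ) : ConvexOn ℝ univ (l1Penalized L τ) :=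
  hL.add (convexOn_sum_abs.smul hτ)

theorem l1Penalized_add_of_disjoint (L : EuclideanSpace ℝ ι → ℝ) (τ : ℝ)
    (y w : EuclideanSpace ℝ ι) (h : ∀ i, y i = 0 ∨ w i = 0) :
    l1Penalized L τ (y + w) = l1Penalized L τ y + (L (y + w) - L y) + τ * ∑ i, |w i| := by
  simp only [l1Penalized, PiLp.add_apply, sum_abs_add_of_disjoint _ _ h]
  ring

theorem inv_mul_sub_add_le_inv_mul_l1Penalized_sub (L : EuclideanSpace ℝ ι → ℝ) (τ : ℝ)
    {x v w : EuclideanSpace ℝ ι} {t : ℝ} (ht : 0 < t)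
    (hmin : l1Penalized L τ x ≤ l1Penalized L τ (x + t • (v - w)))
    (hdisj : ∀ i, (x + t • (v - w)) i = 0 ∨ w i = 0) :
    t⁻¹ * (L (x + t • v) - L (x + t • (v - w))) + τ * ∑ i, |w i| ≤
      t⁻¹ * (l1Penalized L τ (x + t • v) - l1Penalized L τ x) := by
  have hsplit : x + t • v = x + t • (v - w) + t • w := by module
  have hdisj' (i : ι) : (x + t • (v - w)) i = 0 ∨ (t • w) i = 0 := by
    simpa [ht.ne'] using hdisj i
  have hscale : ∑ i, |(t • w) i| = t * ∑ i, |w i| := by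
    simp only [PiLp.smul_apply, smul_eq_mul, abs_mul, abs_of_pos ht, ← Finset.mul_sum]
  have hgap : 0 ≤ t⁻¹ * (l1Penalized L τ (x + t • (v - w)) - l1Penalized L τ x) :=
    mul_nonneg (inv_nonneg.2 ht.le) (sub_nonneg.2 hmin)
  rw [hsplit, l1Penalized_add_of_disjoint L τ _ _ hdisj', hscale]
  linear_combination hgap - τ * (∑ i, |w i|) * inv_mul_cancel₀ ht.ne'

end L1

theorem primal_dual_witness_global_min_general {p : ℕ}
    (L : EuclideanSpace ℝ (Fin p) → ℝ)
    (hconv : ConvexOn ℝ Set.univ L)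
    (hdiff : Differentiable ℝ L)
    (S : Set (Fin p)) (τ : ℝ) (hτ : 0 < τ)
    (βcheck : EuclideanSpace ℝ (Fin p))
    (hsupp : ∀ i ∉ S, βcheck i = 0)
    (hmin : ∀ β : EuclideanSpace ℝ (Fin p), (∀ i ∉ S, β i = 0) →
        L βcheck + τ * ∑ i, |βcheck i| ≤ L β + τ * ∑ i, |β i|)
    (hdual : ∀ i ∉ S, |fderiv ℝ L βcheck (EuclideanSpace.single i 1)| < τ) :
    ∀ β : EuclideanSpace ℝ (Fin p),
        L βcheck + τ * ∑ i, |βcheck i| ≤ L β + τ * ∑ i, |β i| := by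
  intro β
  obtain ⟨w, hwS, hwSc⟩ : ∃ w : EuclideanSpace ℝ (Fin p),
      (∀ i ∈ S, w i = 0) ∧ ∀ i ∉ S, w i = β i :=
    ⟨WithLp.toLp 2 (Sᶜ.indicator β), fun i hi => by simp [hi], fun i hi => by simp [hi]⟩
  set v := β - βcheck
  have hrestr (t : ℝ) : ∀ i ∉ S, (βcheck + t • (v - w)) i = 0 := fun i hi => by
    simp [v, hsupp i hi, hwSc i hi]
  have hdisj (t : ℝ) (i : Fin p) : (βcheck + t • (v - w)) i = 0 ∨ w i = 0 := by
    by_cases hi : i ∈ S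
    · exact .inr (hwS i hi)
    · exact .inl (hrestr t i hi)
  have hslope (t : ℝ) (ht : 0 < t) :=
    inv_mul_sub_add_le_inv_mul_l1Penalized_sub L τ ht (hmin _ (hrestr t)) (hdisj t)
  have hlim := ((hdiff βcheck).hasFDerivAt.tendsto_slope_sub_right v (v - w)).add_const
    (τ * ∑ i, |w i|)
  rw [sub_sub_cancel] at hlim
  have hgrad := abs_apply_le_mul_sum_abs (fderiv ℝ L βcheck) S (fun i hi => (hdual i hi).le) w hwS
  have hF := (convexOn_l1Penalized hconv hτ.le).add_le_of_tendsto_of_le_slope βcheck v hslope hlim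
  simp only [l1Penalized, v, add_sub_cancel] at hF
  linarith [neg_abs_le (fderiv ℝ L βcheck w)]

theorem primal_dual_witness_global_min {p : ℕ}
    (L : EuclideanSpace ℝ (Fin p) → ℝ)
    (hconv : ConvexOn ℝ Set.univ L)
    (hdiff : Differentiable ℝ L)
    (S : Set (Fin p)) (τ : ℝ) (hτ : 0 < τ)
    (βcheck : EuclideanSpace ℝ (Fin p))
    (hsupp : ∀ i ∉ S, βcheck i = 0)
    (hmin : ∀ β : EuclideanSpace ℝ (Fin p), (∀ i ∉ S, β i = 0) →
        L βcheck + τ * ∑ i, |βcheck i| ≤ L β + τ * ∑ i, |β i|)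
    (zcheck : Fin p → ℝ)
    (hstat : ∀ i ∈ S,
        fderiv ℝ L βcheck (EuclideanSpace.single i 1) + τ * zcheck i = 0)
    (hzbound : ∀ i ∈ S, |zcheck i| ≤ 1)
    (hdual : ∀ i ∉ S, |fderiv ℝ L βcheck (EuclideanSpace.single i 1)| < τ) :
    ∀ β : EuclideanSpace ℝ (Fin p),
        L βcheck + τ * ∑ i, |βcheck i| ≤ L β + τ * ∑ i, |β i| :=
  primal_dual_witness_global_min_general L hconv hdiff S τ hτ βcheck hsupp hmin hdual
end
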